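/- Let X be a separable infinite-dimensional complex Banach space, N ≥ 2, and let T₁, …, T_N be continuous linear operators on X. If T₁, …, T_N satisfy the d-Hypercyclicity Criterion with respect to some strictly increasing sequence (n_k) of positive integers, then T₁, …, T_N are densely d-hypercyclic, i.e. the set of x ∈ X such that {(T₁^n x, …, T_N^n x) : n ∈ ℕ} is dense in X^N is itself dense in X. -/

import Mathlib

/-! Birkhoff transitivity: if every nonempty open set of `X` is sent by some `F i` into every
nonempty open set of `Y`, then for each basic open `V` the points `x` with some `F i x ∈ V` form a
dense open set, and by Baire their countable intersection, the points with dense orbit, is dense.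
The d-Hypercyclicity Criterion gives this transitivity for the orbit maps `x ↦ (T l ^ m x)_l`: for
`x ∈ X₀` and `u l ∈ Xs l`, the vector `x + ∑ i, S i k (u i)` tends to `x` while its image under
`T l ^ n k` tends to `u l`. -/

open Filter Topology

/-- Continuous linear operators `T 0, …, T (N-1)` on `X` satisfy the d-Hypercyclicity Criterion
with respect to the strictly increasing sequence `(n k)` of positive integers. -/
def DHypCriterionWrt {X : Type*} [NormedAddCommGroup X] [NormedSpace ℂ X]
    {N : ℕ} (T : Fin N → X →L[ℂ] X) (n : ℕ → ℕ) : Prop :=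
  ∃ (X₀ : Set X) (Xs : Fin N → Set X) (S : Fin N → ℕ → X → X),
    Dense X₀ ∧ (∀ l, Dense (Xs l)) ∧
    (∀ l : Fin N, ∀ x ∈ X₀, Tendsto (fun k => ((T l) ^ (n k)) x) atTop (𝓝 0)) ∧
    (∀ l : Fin N, ∀ x ∈ Xs l, Tendsto (fun k => S l k x) atTop (𝓝 0)) ∧
    (∀ l i : Fin N, ∀ x ∈ Xs i,
      Tendsto (fun k => ((T l) ^ (n k)) (S i k x) - (if i = l then x else 0)) atTop (𝓝 0))

theorem dense_setOf_denseRange_of_transitive {ι X Y : Type*} [Countable ι]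
    [TopologicalSpace X] [BaireSpace X] [TopologicalSpace Y] [SecondCountableTopology Y]
    (F : ι → X → Y) (hF : ∀ i, Continuous (F i))
    (htrans : ∀ U V, IsOpen U → IsOpen V → U.Nonempty → V.Nonempty →
      ∃ i, (U ∩ F i ⁻¹' V).Nonempty) :
    Dense {x | DenseRange fun i => F i x} := by
  obtain ⟨B, hBc, hBempty, hB⟩ := TopologicalSpace.exists_countable_basis Y
  have hsub : (⋂ V ∈ B, ⋃ i, F i ⁻¹' V) ⊆ {x | DenseRange fun i => F i x} := by
    intro x hx
    refine hB.dense_iff.2 fun V hV _ => ?_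
    obtain ⟨i, hi⟩ := Set.mem_iUnion.1 (Set.mem_iInter₂.1 hx V hV)
    exact ⟨F i x, hi, i, rfl⟩
  refine Dense.mono hsub (dense_biInter_of_isOpen
    (fun V hV => isOpen_iUnion fun i => (hB.isOpen hV).preimage (hF i)) hBc fun V hV => ?_)
  refine dense_iff_inter_open.2 fun U hU hUne => ?_
  obtain ⟨i, x, hxU, hxV⟩ := htrans U V hU (hB.isOpen hV) hUne
    (Set.nonempty_iff_ne_empty.2 fun h => hBempty (h ▸ hV))
  exact ⟨x, hxU, Set.mem_iUnion.2 ⟨i, hxV⟩⟩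

section

variable {X : Type*} [NormedAddCommGroup X] [NormedSpace ℂ X] {N : ℕ} {T : Fin N → X →L[ℂ] X}
  {n : ℕ → ℕ}

theorem tendsto_pow_apply_add_sum {S : Fin N → ℕ → X → X} {x : X} {u : Fin N → X}
    (hx : ∀ l, Tendsto (fun k => ((T l) ^ (n k)) x) atTop (𝓝 0))
    (hTS : ∀ l i, Tendsto (fun k => ((T l) ^ (n k)) (S i k (u i)) - (if i = l then u i else 0))
      atTop (𝓝 0)) :
    Tendsto (fun k l => ((T l) ^ (n k)) (x + ∑ i, S i k (u i))) atTop (𝓝 u) := by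
  refine tendsto_pi_nhds.2 fun l => ?_
  have hsum := tendsto_finsetSum Finset.univ fun i (_ : i ∈ Finset.univ) => hTS l i
  have hlim := (hx l).add (hsum.add_const (u l))
  simp only [Finset.sum_const_zero, zero_add] at hlim
  refine hlim.congr fun k => ?_
  simp only [map_add, map_sum, Finset.sum_sub_distrib, Finset.sum_ite_eq', Finset.mem_univ,
    if_true, sub_add_cancel]

theorem DHypCriterionWrt.orbit_transitive (hcrit : DHypCriterionWrt T n) (U : Set X)
    (V : Set (Fin N → X)) (hU : IsOpen U) (hV : IsOpen V) (hUne : U.Nonempty)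
    (hVne : V.Nonempty) : ∃ m, (U ∩ (fun x l => ((T l) ^ m) x) ⁻¹' V).Nonempty := by
  obtain ⟨X₀, Xs, S, hX₀, hXs, hT0, hS0, hTS⟩ := hcrit
  obtain ⟨x, hxX₀, hxU⟩ := hX₀.exists_mem_open hU hUne
  obtain ⟨u, huXs, huV⟩ := (dense_pi Set.univ fun l _ => hXs l).exists_mem_open hV hVne
  have hu : ∀ i, u i ∈ Xs i := fun i => huXs i (Set.mem_univ i)
  have hsmall : Tendsto (fun k => x + ∑ i, S i k (u i)) atTop (𝓝 x) := by
    simpa using tendsto_const_nhds.add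
      (tendsto_finsetSum Finset.univ fun i (_ : i ∈ Finset.univ) => hS0 i (u i) (hu i))
  have himage := tendsto_pow_apply_add_sum (fun l => hT0 l x hxX₀) fun l i => hTS l i (u i) (hu i)
  obtain ⟨k, hkU, hkV⟩ :=
    ((hsmall.eventually (hU.mem_nhds hxU)).and (himage.eventually (hV.mem_nhds huV))).exists
  exact ⟨n k, _, hkU, hkV⟩

end

theorem stmt15_general
    {X : Type*} [NormedAddCommGroup X] [NormedSpace ℂ X] [CompleteSpace X]
    [TopologicalSpace.SeparableSpace X]
    {N : ℕ} (T : Fin N → X →L[ℂ] X)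
    (n : ℕ → ℕ)
    (hcrit : DHypCriterionWrt T n) :
    Dense {x : X | Dense (Set.range fun m : ℕ => fun l : Fin N => ((T l) ^ m) x)} :=
  dense_setOf_denseRange_of_transitive (fun m x l => ((T l) ^ m) x)
    (fun m => continuous_pi fun l => ((T l) ^ m).continuous) hcrit.orbit_transitive

theorem stmt15
    {X : Type*} [NormedAddCommGroup X] [NormedSpace ℂ X] [CompleteSpace X]
    [TopologicalSpace.SeparableSpace X] (hinfdim : ¬ FiniteDimensional ℂ X)
    {N : ℕ} (hN : 2 ≤ N) (T : Fin N → X →L[ℂ] X)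
    (n : ℕ → ℕ) (hn : StrictMono n) (hn1 : ∀ k, 1 ≤ n k)
    (hcrit : DHypCriterionWrt T n) :
    Dense {x : X | Dense (Set.range fun m : ℕ => fun l : Fin N => ((T l) ^ m) x)} :=
  stmt15_general T n hcrit
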